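/- Identity relational connectors are neutral for composition: for every relational connector L : G → F between Set functors, L = id_F · L = L · id_G. -/

import Mathlib

open CategoryTheory

universe u

/-- A `Set` functor: a functor from the category of sets (types) to itself. -/
abbrev SetFunctor : Type (u + 1) := CategoryTheory.Functor (Type u) (Type u)

/-- Applicative-order composition of relations: `(rcomp s r) x z ↔ ∃ y, r x y ∧ s y z`,
i.e. `s · r` in the notation of the paper. -/
def rcomp {X Y Z : Type u} (s : Y → Z → Prop) (r : X → Y → Prop) : X → Z → Prop :=
  fun x z => ∃ y, r x y ∧ s y z

/-- Relational converse `r°`. -/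
def rconv {X Y : Type u} (r : X → Y → Prop) : Y → X → Prop := fun y x => r x y

/-- The graph of a function, identifying functions with relations. -/
def graph {X Y : Type u} (f : X → Y) : X → Y → Prop := fun x y => f x = y

/-- The diagonal relation `Δ_X`. -/
def diag (X : Type u) : X → X → Prop := fun x y => x = y

/-- Relational image `r[A]`. -/
def rimage {X Y : Type u} (r : X → Y → Prop) (A : Set X) : Set Y :=
  {y | ∃ x ∈ A, r x y}

/-- The pointwise product of two `Set` functors. -/
def prodFunctor (F₁ F₂ : SetFunctor.{u}) : SetFunctor.{u} where
  obj X := F₁.obj X × F₂.obj X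
  map f := TypeCat.ofHom fun (p : F₁.obj _ × F₂.obj _) => (F₁.map f p.1, F₂.map f p.2)
  map_id X := by ext p <;> simp
  map_comp f g := by ext p <;> simp

/-- An assignment of relations `F X ⇸ G Y` to relations `X ⇸ Y`; a relational connector
is such an assignment satisfying monotonicity and naturality (`RelConn.IsConnector`). -/
structure RelConn (F G : SetFunctor.{u}) : Type (u + 1) where
  rel : ∀ {X Y : Type u}, (X → Y → Prop) → F.obj X → G.obj Y → Prop

namespace RelConn

variable {F G H V : SetFunctor.{u}}

/-- Monotonicity: `r₁ ⊆ r₂` implies `L r₁ ⊆ L r₂`. -/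
def Mono (L : RelConn F G) : Prop :=
  ∀ (X Y : Type u) (r₁ r₂ : X → Y → Prop), (∀ x y, r₁ x y → r₂ x y) →
    ∀ a b, L.rel r₁ a b → L.rel r₂ a b

/-- Naturality: `L(g° · r · f) = (G g)° · L r · F f`. -/
def Natural (L : RelConn F G) : Prop :=
  ∀ (X X' Y Y' : Type u) (f : X' → X) (g : Y' → Y) (r : X → Y → Prop),
    L.rel (rcomp (rconv (graph g)) (rcomp r (graph f))) =
      rcomp (rconv (graph (G.map (TypeCat.ofHom g)))) (rcomp (L.rel r) (graph (F.map (TypeCat.ofHom f))))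

/-- A relational connector: a monotone and natural assignment of relations. -/
def IsConnector (L : RelConn F G) : Prop := L.Mono ∧ L.Natural

/-- The pointwise order on connectors: `L ≤ K` iff `L r ⊆ K r` for all `r`. -/
def le (L K : RelConn F G) : Prop :=
  ∀ (X Y : Type u) (r : X → Y → Prop) (a : F.obj X) (b : G.obj Y), L.rel r a b → K.rel r a b

/-- The composite `L · K` of relational connectors:
`(L · K) r = ⋃ { L s · K t | s · t = r }`, the join over all factorizations of `r`
through an arbitrary intermediate set `Y`. -/
def comp (L : RelConn G H) (K : RelConn F G) : RelConn F H where
  rel := fun {X Z} r a c => ∃ (Y : Type u) (t : X → Y → Prop) (s : Y → Z → Prop),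
    rcomp s t = r ∧ ∃ b, K.rel t a b ∧ L.rel s b c

/-- The converse `L°` of a connector: `L° r = (L (r°))°`. -/
def conv (L : RelConn F G) : RelConn G F where
  rel := fun {X Y} r b a => L.rel (rconv r) a b

/-- The meet (pointwise intersection) of two connectors. -/
def meet (L K : RelConn F G) : RelConn F G where
  rel := fun {X Y} r a b => L.rel r a b ∧ K.rel r a b

/-- The product `L₁ × L₂` of connectors. -/
def prod {F₁ F₂ G₁ G₂ : SetFunctor.{u}} (L₁ : RelConn F₁ G₁) (L₂ : RelConn F₂ G₂) :
    RelConn (prodFunctor F₁ F₂) (prodFunctor G₁ G₂) where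
  rel := fun {X Y} r p q => L₁.rel r p.1 q.1 ∧ L₂.rel r p.2 q.2

/-- The identity relational connector `id_F`: `b (id_F r) c` iff for all set functors `G`,
all relational connectors `L : G → F`, all `s : Z ⇸ X` and `a ∈ G Z`,
`a (L s) b` implies `a (L (r · s)) c`. -/
def id (F : SetFunctor.{u}) : RelConn F F where
  rel := fun {X Y} r b c =>
    ∀ (G : SetFunctor.{u}) (L : RelConn G F), L.IsConnector →
      ∀ (Z : Type u) (s : Z → X → Prop) (a : G.obj Z),
        L.rel s a b → L.rel (rcomp r s) a c

/-- A connector `L : F → F` is transitive if `L · L ≤ L`. -/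
def Transitive (L : RelConn F F) : Prop := (L.comp L).le L

/-- A connector `L : F → F` is symmetric if `L° ≤ L`. -/
def Symmetric (L : RelConn F F) : Prop := L.conv.le L

/-- A connector `L : F → F` extends `F` if `Δ_{F X} ⊆ L Δ_X` for all `X`. -/
def ExtendsF (L : RelConn F F) : Prop :=
  ∀ (X : Type u) (a b : F.obj X), diag (F.obj X) a b → L.rel (diag X) a b

/-- Condition (L2) of lax extensions: `L s · L r ⊆ L (s · r)`. -/
def LaxL2 (L : RelConn F F) : Prop :=
  ∀ (X Y Z : Type u) (r : X → Y → Prop) (s : Y → Z → Prop) (a : F.obj X) (c : F.obj Z),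
    rcomp (L.rel s) (L.rel r) a c → L.rel (rcomp s r) a c

/-- Condition (L3) of lax extensions: `F f ⊆ L f` and `(F f)° ⊆ L (f°)`. -/
def LaxL3 (L : RelConn F F) : Prop :=
  ∀ (X Y : Type u) (f : X → Y),
    (∀ a b, graph (F.map (TypeCat.ofHom f)) a b → L.rel (graph f) a b) ∧
    (∀ b a, rconv (graph (F.map (TypeCat.ofHom f))) b a → L.rel (rconv (graph f)) b a)

/-- A lax extension of `F`: an assignment of relations satisfying (L1) monotonicity,
(L2) and (L3). -/
def IsLaxExtension (L : RelConn F F) : Prop := L.Mono ∧ L.LaxL2 ∧ L.LaxL3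

/-- A connector `L : F → G` extends a natural transformation `α : F ⇒ G` if the graph of
`α_X` is contained in `L Δ_X` for all sets `X`. -/
def Extends (L : RelConn F G) (α : F ⟶ G) : Prop :=
  ∀ (X : Type u) (a : F.obj X) (b : G.obj X), graph (α.app X) a b → L.rel (diag X) a b

end RelConn

/-- The connector `id_G • α` obtained from a natural transformation `α : F ⇒ G`:
`(id_G • α) r = (id_G r) · α_X`. -/
def idBullet {F G : SetFunctor.{u}} (α : F ⟶ G) : RelConn F G where
  rel := fun {X Y} r => rcomp ((RelConn.id G).rel r) (graph (α.app X))

/-- The intermediate set of the couniversal factorization of `r : X ⇸ Z`: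
`{(A,B) ∈ P(X) × P(Z) | A × B ⊆ r}`. -/
def CoInt {X Z : Type u} (r : X → Z → Prop) : Type u :=
  {p : Set X × Set Z // ∀ x ∈ p.1, ∀ z ∈ p.2, r x z}

/-- The first leg `t = {(x,(A,B)) | x ∈ A}` of the couniversal factorization. -/
def coT {X Z : Type u} (r : X → Z → Prop) : X → CoInt r → Prop := fun x p => x ∈ p.1.1

/-- The second leg `s = {((A,B),z) | z ∈ B}` of the couniversal factorization. -/
def coS {X Z : Type u} (r : X → Z → Prop) : CoInt r → Z → Prop := fun p z => z ∈ p.1.2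

/-- `f : (C,γ) → (D,δ)` is a morphism of `F`-coalgebras: `F f ∘ γ = δ ∘ f`. -/
def IsCoalgMor {F : SetFunctor.{u}} {C D : Type u} (γ : C → F.obj C) (δ : D → F.obj D)
    (f : C → D) : Prop := ∀ x, F.map (TypeCat.ofHom f) (γ x) = δ (f x)

/-- `r : C ⇸ D` is an `L`-simulation between the `F`-coalgebra `(C,γ)` and the
`G`-coalgebra `(D,δ)`: `x r y` implies `γ x (L r) δ y`. -/
def IsSim {F G : SetFunctor.{u}} (L : RelConn F G) {C D : Type u}
    (γ : C → F.obj C) (δ : D → G.obj D) (r : C → D → Prop) : Prop :=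
  ∀ x y, r x y → L.rel r (γ x) (δ y)

/-- `L`-similarity: `x ≼_L y` iff some `L`-simulation relates `x` to `y`. -/
def RelSimilar {F G : SetFunctor.{u}} (L : RelConn F G) {C D : Type u}
    (γ : C → F.obj C) (δ : D → G.obj D) : C → D → Prop :=
  fun x y => ∃ r, IsSim L γ δ r ∧ r x y

/-- `r : C ⇸ D` is an `L`-bisimulation (for `L : F → F`): both `r` and `r°`
are `L`-simulations. -/
def IsBisim {F : SetFunctor.{u}} (L : RelConn F F) {C D : Type u}
    (γ : C → F.obj C) (δ : D → F.obj D) (r : C → D → Prop) : Prop :=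
  IsSim L γ δ r ∧ IsSim L δ γ (rconv r)

/-- `L`-bisimilarity: `x ≃_L y` iff some `L`-bisimulation relates `x` to `y`. -/
def Bisimilar {F : SetFunctor.{u}} (L : RelConn F F) {C D : Type u}
    (γ : C → F.obj C) (δ : D → F.obj D) : C → D → Prop :=
  fun x y => ∃ r, IsBisim L γ δ r ∧ r x y

/-- Heterogeneous `L`-bisimulation for `L : F → G`: `r` is an `L`-simulation and `r°`
is an `L°`-simulation. -/
def IsBisimHet {F G : SetFunctor.{u}} (L : RelConn F G) {C D : Type u}
    (γ : C → F.obj C) (δ : D → G.obj D) (r : C → D → Prop) : Prop :=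
  IsSim L γ δ r ∧ IsSim L.conv δ γ (rconv r)

/-- Heterogeneous `L`-bisimilarity for `L : F → G`. -/
def BisimilarHet {F G : SetFunctor.{u}} (L : RelConn F G) {C D : Type u}
    (γ : C → F.obj C) (δ : D → G.obj D) : C → D → Prop :=
  fun x y => ∃ r, IsBisimHet L γ δ r ∧ r x y

/-- An `n`-ary predicate lifting for a `Set` functor `F`: a natural transformation
`(2^(-))ⁿ ⇒ 2^(F -)` with the contravariant powerset functor. -/
structure PredLifting (F : SetFunctor.{u}) (n : ℕ) : Type (u + 1) where
  app : ∀ (X : Type u), (Fin n → Set X) → Set (F.obj X)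
  natural : ∀ (X Y : Type u) (f : X → Y) (A : Fin n → Set Y) (a : F.obj X),
    F.map (TypeCat.ofHom f) a ∈ app Y A ↔ a ∈ app X (fun i => f ⁻¹' (A i))

/-- Monotonicity of a predicate lifting. -/
def PredLifting.IsMonotone {F : SetFunctor.{u}} {n : ℕ} (lam : PredLifting F n) : Prop :=
  ∀ (X : Type u) (A B : Fin n → Set X), (∀ i, A i ⊆ B i) → lam.app X A ⊆ lam.app X B

/-- The dual predicate lifting `λ̄_X(A₁,…,Aₙ) = F X \ λ_X(X\A₁,…,X\Aₙ)`. -/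
def PredLifting.dual {F : SetFunctor.{u}} {n : ℕ} (lam : PredLifting F n) :
    PredLifting F n where
  app X A := (lam.app X fun i => (A i)ᶜ)ᶜ
  natural := by
    intro X Y f A a
    simp only [Set.mem_compl_iff, lam.natural, Set.preimage_compl]

/-- The Kantorovich connector `L_Λ` induced by an arity-preserving relation `Λ` between
monotone predicate liftings of `F` and of `G`: `a (L_Λ r) b` iff for every `n`-ary pair
`(λ,μ) ∈ Λ` and all `A₁,…,Aₙ ⊆ X`, `a ∈ λ_X(A₁,…,Aₙ)` implies `b ∈ μ_Y(r[A₁],…,r[Aₙ])`. -/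
def kantorovich {F G : SetFunctor.{u}}
    (Λ : ∀ n : ℕ, PredLifting F n → PredLifting G n → Prop) : RelConn F G where
  rel := fun {X Y} r a b =>
    ∀ (n : ℕ) (lam : PredLifting F n) (mu : PredLifting G n), Λ n lam mu →
      ∀ A : Fin n → Set X, a ∈ lam.app X A → b ∈ mu.app Y (fun i => rimage r (A i))

/-!
Left neutrality is the defining property of `id_F`, instantiated at `L` itself. For right
neutrality, `a (id_G t) b` must be transported *backwards* along `L : G → F`, from `b (L s) c`
to `a (L (s · t)) c`. As `id_G` only tests connectors *into* `G`, we feed it the "dual"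
connector `C ↦ ¬ g (L (q ⊸ C)) c`, defined on the functor `X ↦ (X ⇸ Z)` on which `f` acts by
`C ↦ f ⊸ C`, where `q ⊸ C = {(u, z) | ∀ w, w q u → w C z}`. Testing it at `C = s · t` gives the
claim, because `s ⊆ t ⊸ (s · t)`.
-/

section Relations

variable {X Y Z : Type u}

lemma rcomp_diag_left (r : X → Y → Prop) : rcomp (diag Y) r = r := by
  funext x y
  simp [rcomp, diag]

lemma rcomp_diag_right (r : X → Y → Prop) : rcomp r (diag X) = r := by
  funext x y
  simp [rcomp, diag]

lemma rconv_graph_id : rconv (graph (_root_.id : X → X)) = diag X := by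
  funext x y
  simp [rconv, graph, diag, eq_comm]

lemma rcomp_rconv_graph_graph_apply {X' Y' : Type u} (f : X' → X) (g : Y' → Y)
    (r : X → Y → Prop) (x : X') (y : Y') :
    rcomp (rconv (graph g)) (rcomp r (graph f)) x y ↔ r (f x) (g y) := by
  simp [rcomp, rconv, graph]

/-- `q ⊸ C`, the largest `R` with `R · q° ⊆ C`. -/
def resid {W U : Type u} (q : W → U → Prop) (C : W → Z → Prop) : U → Z → Prop :=
  fun u z => ∀ w, q w u → C w z

lemma resid_diag (C : X → Z → Prop) : resid (diag X) C = C := by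
  funext x z
  simp [resid, diag]

lemma le_resid_rcomp (s : Y → Z → Prop) (t : X → Y → Prop) :
    ∀ y z, s y z → resid t (rcomp s t) y z :=
  fun y _ hs _ ht => ⟨y, ht, hs⟩

lemma resid_rcomp_rconv_graph {X' Y' : Type u} (f : X' → X) (g : Y' → Y) (r : X → Y → Prop)
    (C : X' → Z → Prop) :
    resid (rcomp (rconv (graph g)) (rcomp r (graph f))) C =
      rcomp (resid r (resid (graph f) C)) (graph g) := by
  ext y z
  simp only [resid, rcomp, rconv, graph]
  constructor
  · intro h
    exact ⟨_, rfl, fun x hx w hw => h w ⟨_, ⟨x, hw, hx⟩, rfl⟩⟩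
  · rintro ⟨_, rfl, h⟩ w ⟨_, ⟨x, hw, hx⟩, rfl⟩
    exact h x hx w hw

end Relations

def residFunctor (Z : Type u) : SetFunctor.{u} where
  obj X := X → Z → Prop
  map f := TypeCat.ofHom (resid (graph f))
  map_id X := by
    ext C x z
    simp [resid, graph]
  map_comp f g := by
    ext C x z
    change (∀ w, (f ≫ g) w = x → C w z) ↔ ∀ w, g w = x → ∀ w₁, f w₁ = w → C w₁ z
    constructor
    · rintro h _ rfl w₁ rfl
      exact h w₁ rfl
    · rintro h w₁ rfl
      exact h _ rfl w₁ rfl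

namespace RelConn

variable {F G : SetFunctor.{u}}

lemma ext {K M : RelConn F G}
    (h : ∀ (X Y : Type u) (r : X → Y → Prop) (a : F.obj X) (b : G.obj Y),
      K.rel r a b ↔ M.rel r a b) : K = M := by
  obtain ⟨k⟩ := K
  obtain ⟨m⟩ := M
  congr
  funext X Y r a b
  exact propext (h X Y r a b)

lemma natural_iff {L : RelConn F G} :
    L.Natural ↔ ∀ (X X' Y Y' : Type u) (f : X' → X) (g : Y' → Y) (r : X → Y → Prop) a b,
      L.rel (rcomp (rconv (graph g)) (rcomp r (graph f))) a b ↔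
        L.rel r (F.map (TypeCat.ofHom f) a) (G.map (TypeCat.ofHom g) b) := by
  refine ⟨fun hN X X' Y Y' f g r a b => ?_, fun h X X' Y Y' f g r => ?_⟩
  · rw [hN, rcomp_rconv_graph_graph_apply]
  · funext a b
    rw [h, rcomp_rconv_graph_graph_apply]

lemma Natural.rel_rcomp_graph {L : RelConn F G} (hN : L.Natural) {X X' Y : Type u}
    (f : X' → X) (r : X → Y → Prop) (a : F.obj X') (b : G.obj Y) :
    L.rel (rcomp r (graph f)) a b ↔ L.rel r (F.map (TypeCat.ofHom f) a) b := by
  have h := natural_iff.mp hN X X' Y Y f _root_.id r a b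
  rwa [rconv_graph_id, rcomp_diag_left, show TypeCat.ofHom _root_.id = 𝟙 Y from rfl,
    G.map_id] at h

lemma id_rel_diag (F : SetFunctor.{u}) {X : Type u} (b : F.obj X) :
    (RelConn.id F).rel (diag X) b b := by
  intro G L _ Z s a h
  rwa [rcomp_diag_left]

def dual (L : RelConn G F) {Z : Type u} (c : F.obj Z) : RelConn (residFunctor Z) G where
  rel q C g := ¬ L.rel (resid q C) g c

lemma dual_isConnector {L : RelConn G F} (hL : L.IsConnector) {Z : Type u} (c : F.obj Z) :
    (L.dual c).IsConnector := by
  refine ⟨fun X Y q₁ q₂ hq C g hC hL₂ => hC (hL.1 _ _ _ _ ?_ g c hL₂), natural_iff.mpr ?_⟩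
  · exact fun y z h x hx => h x (hq x y hx)
  · intro X X' Y Y' f g r (C : X' → Z → Prop) y
    show ¬ L.rel (resid _ C) y c ↔
      ¬ L.rel (resid r (resid (graph f) C)) (G.map (TypeCat.ofHom g) y) c
    rw [← hL.2.rel_rcomp_graph, resid_rcomp_rconv_graph]

lemma rel_rcomp_of_id_rel {L : RelConn G F} (hL : L.IsConnector) {X Y Z : Type u}
    {t : X → Y → Prop} {s : Y → Z → Prop} {a : G.obj X} {b : G.obj Y} {c : F.obj Z}
    (hid : (RelConn.id G).rel t a b) (hs : L.rel s b c) : L.rel (rcomp s t) a c := by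
  by_contra h
  have ha : (L.dual c).rel (diag X) (rcomp s t) a := by
    show ¬ L.rel (resid (diag X) (rcomp s t)) a c
    rwa [resid_diag]
  have hb := hid _ (L.dual c) (dual_isConnector hL c) X (diag X) (rcomp s t) ha
  rw [rcomp_diag_right] at hb
  exact hb (hL.1 _ _ s _ (le_resid_rcomp s t) b c hs)

lemma id_comp {L : RelConn G F} (hL : L.IsConnector) : (RelConn.id F).comp L = L := by
  refine ext fun X Z r a c =>
    ⟨?_, fun h => ⟨Z, r, diag Z, rcomp_diag_left r, c, h, id_rel_diag F c⟩⟩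
  rintro ⟨Y, t, s, rfl, b, hb, hid⟩
  exact hid G L hL X t a hb

lemma comp_id {L : RelConn G F} (hL : L.IsConnector) : L.comp (RelConn.id G) = L := by
  refine ext fun X Z r a c =>
    ⟨?_, fun h => ⟨X, diag X, r, rcomp_diag_right r, a, id_rel_diag G a, h⟩⟩
  rintro ⟨Y, t, s, rfl, b, hid, hb⟩
  exact rel_rcomp_of_id_rel hL hid hb

end RelConn

/-- identity relational connectors are neutral for composition:
`L = id_F · L = L · id_G` for every relational connector `L : G → F`. -/
theorem id_comp_neutral (F G : SetFunctor.{u}) (L : RelConn G F) (hL : L.IsConnector) :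
    L = (RelConn.id F).comp L ∧ L = L.comp (RelConn.id G) :=
  ⟨(RelConn.id_comp hL).symm, (RelConn.comp_id hL).symm⟩
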